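/- For all sufficiently large n, the gradient of f has a unique zero in the region R = {(k,l) ∈ ℝ² : k ≥ 1, l ≥ 1, k + l ≤ n − 1}; this zero has the symmetric form (k*(n), k*(n)), and k*(n) = (ln n − ln ln n + ln ln 2)/ln 2 + O(ln ln n / ln n); that is, there exist constants C and N such that for all n ≥ N, |k*(n) − (ln n − ln ln n + ln ln 2)/ln 2| ≤ C · ln ln n / ln n. -/

import Mathlib

/-!
Write `c = ln 2`. For `0 < l < k` with `k + l ≤ n` the two partial derivatives differ by
`∂f/∂l (k,l) - ∂f/∂k (k,l) = ln k - ln l + (n - k - l) c (2^{-l} - 2^{-k}) > 0`, so both can vanish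
only on the diagonal. There `ψ(x) = ∂f/∂k (x,x)` is strictly decreasing on `(0, n/2]`, hence has at
most one zero. At `t = (ln n - ln ln n + ln ln 2)/c` one has `n c 2^{-t} = ln n`, which cancels the
terms of size `ln n` in `ψ` and leaves `ψ(t) ≈ ln ln n > 0`; at `t + ε` with `ε = 5 ln ln n / ln n`
the factor `2^{-ε} ≈ 1 - 5 c ln ln n / ln n` costs about `5 c ln ln n > ln ln n`, so `ψ(t + ε) < 0`.
The zero of `ψ` therefore lies in `[t, t + ε]`.
-/

open Filter Real

noncomputable def f (n : ℕ) (k l : ℝ) : ℝ :=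
  (k + l + 1) * Real.log n - k * Real.log k - l * Real.log l + k + l
    - ((k + l) ^ 2 / 2) * Real.log 2 - ((k + l) / 2) * Real.log 2
    - ((n : ℝ) - k - l) * (Real.exp (-k * Real.log 2) + Real.exp (-l * Real.log 2))

def region (n : ℕ) : Set (ℝ × ℝ) :=
  {p : ℝ × ℝ | 1 ≤ p.1 ∧ 1 ≤ p.2 ∧ p.1 + p.2 ≤ (n : ℝ) - 1}

def IsCritPt (n : ℕ) (k l : ℝ) : Prop :=
  deriv (fun k' => f n k' l) k = 0 ∧ deriv (fun l' => f n k l') l = 0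

open Set

noncomputable def fstPartial (n : ℕ) (k l : ℝ) : ℝ :=
  log n - log k - (k + l) * log 2 - log 2 / 2 + exp (-k * log 2) + exp (-l * log 2)
    + (n - k - l) * log 2 * exp (-k * log 2)

theorem f_comm (n : ℕ) (k l : ℝ) : f n k l = f n l k := by
  unfold f; ring

theorem hasDerivAt_f_fst (n : ℕ) (l : ℝ) {k : ℝ} (hk : k ≠ 0) :
    HasDerivAt (fun k' => f n k' l) (fstPartial n k l) k := by
  have hpow : HasDerivAt (fun x => exp (-x * log 2)) (-log 2 * exp (-k * log 2)) k := by
    simpa [mul_comm] using ((hasDerivAt_neg k).mul_const (log 2)).exp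
  have hlin : ∀ a b : ℝ, HasDerivAt (fun x => (x + a) * b) b k := fun a b => by
    simpa using ((hasDerivAt_id k).add_const a).mul_const b
  have := ((((((hlin (l + 1) (log n)).sub (hasDerivAt_mul_log hk)).sub_const (l * log l)).add
    (hlin l 1)).sub ((((hasDerivAt_id k).add_const l).pow 2).div_const 2 |>.mul_const (log 2))).sub
    ((hlin l (1 / 2)).mul_const (log 2))).sub
    (((hasDerivAt_id k).const_sub (n : ℝ)).sub_const l |>.mul (hpow.add_const (exp (-l * log 2))))
  refine (this.congr_deriv ?_).congr_of_eventuallyEq (.of_forall fun x => ?_)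
  · simp only [fstPartial, id]; ring
  · simp only [f, Pi.sub_apply, Pi.add_apply, Pi.mul_apply, Pi.pow_apply, id]; ring

theorem deriv_f_snd (n : ℕ) (k : ℝ) {l : ℝ} (hl : l ≠ 0) :
    deriv (fun l' => f n k l') l = fstPartial n l k := by
  simp_rw [f_comm n k]
  exact (hasDerivAt_f_fst n k hl).deriv

theorem isCritPt_iff {n : ℕ} {k l : ℝ} (hk : k ≠ 0) (hl : l ≠ 0) :
    IsCritPt n k l ↔ fstPartial n k l = 0 ∧ fstPartial n l k = 0 := by
  rw [IsCritPt, (hasDerivAt_f_fst n l hk).deriv, deriv_f_snd n k hl]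

theorem exp_neg_mul_lt_exp_neg_mul {a x y : ℝ} (ha : 0 < a) (hxy : x < y) :
    exp (-y * a) < exp (-x * a) :=
  exp_lt_exp.2 <| mul_lt_mul_of_pos_right (neg_lt_neg hxy) ha

theorem exp_neg_sub_one_le {y : ℝ} (hy : 0 ≤ y) : exp (-y) - 1 ≤ -(y * (1 - y)) := by
  have hinv : exp (-y) * exp y = 1 := by rw [← exp_add, neg_add_cancel, exp_zero]
  nlinarith [mul_nonneg (exp_pos (-y)).le (sub_nonneg.2 (add_one_le_exp y)),
    mul_nonneg hy (sub_nonneg.2 (one_sub_le_exp_neg y))]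

theorem fstPartial_lt_swap {n : ℕ} {k l : ℝ} (hl : 0 < l) (hlk : l < k) (hkl : k + l ≤ n) :
    fstPartial n k l < fstPartial n l k := by
  have hlog : log l < log k := log_lt_log hl hlk
  have hexp : 0 ≤ (n - k - l) * log 2 * (exp (-l * log 2) - exp (-k * log 2)) :=
    mul_nonneg (mul_nonneg (by linarith) (log_pos one_lt_two).le)
      (sub_nonneg.2 (exp_neg_mul_lt_exp_neg_mul (log_pos one_lt_two) hlk).le)
  simp only [fstPartial]
  nlinarith

noncomputable def diagPartial (n : ℕ) (x : ℝ) : ℝ := fstPartial n x x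

theorem diagPartial_eq (n : ℕ) (x : ℝ) : diagPartial n x =
    log n - log x - 2 * x * log 2 - log 2 / 2 + 2 * exp (-x * log 2)
      + (n - 2 * x) * log 2 * exp (-x * log 2) := by
  simp only [diagPartial, fstPartial]; ring

theorem diagPartial_strictAntiOn (n : ℕ) : StrictAntiOn (diagPartial n) (Ioc 0 (n / 2)) := by
  intro a ⟨ha, _⟩ b ⟨_, hb⟩ hab
  have hlog : log a < log b := log_lt_log ha hab
  have hexp := exp_neg_mul_lt_exp_neg_mul (log_pos one_lt_two) hab
  have hprod : (n - 2 * b) * log 2 * exp (-b * log 2) ≤ (n - 2 * a) * log 2 * exp (-a * log 2) := by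
    refine mul_le_mul (mul_le_mul_of_nonneg_right (by linarith) (log_pos one_lt_two).le) hexp.le
      (exp_pos _).le (mul_nonneg (by linarith) (log_pos one_lt_two).le)
  rw [diagPartial_eq, diagPartial_eq]
  nlinarith [log_pos one_lt_two]

theorem continuousOn_diagPartial (n : ℕ) : ContinuousOn (diagPartial n) (Ioi 0) := by
  have hlog : ContinuousOn log (Ioi 0) := continuousOn_log.mono fun x hx => ne_of_gt hx
  unfold diagPartial fstPartial
  fun_prop

theorem eq_and_diagPartial_eq_zero_of_isCritPt {n : ℕ} {k l : ℝ} (hk : 0 < k) (hl : 0 < l)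
    (hkl : k + l ≤ n) (h : IsCritPt n k l) : k = l ∧ diagPartial n k = 0 := by
  obtain ⟨hkl0, hlk0⟩ := (isCritPt_iff hk.ne' hl.ne').1 h
  have hkeq : k = l := by
    rcases lt_trichotomy k l with hlt | heq | hgt
    · linarith [fstPartial_lt_swap hk hlt (by linarith)]
    · exact heq
    · linarith [fstPartial_lt_swap hl hgt hkl]
  subst hkeq
  exact ⟨rfl, hkl0⟩

theorem isCritPt_unique_of_diagPartial_eq_zero {n : ℕ} {x : ℝ} (hx1 : 1 ≤ x) (hxn : 2 * x ≤ n - 1)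
    (hx : diagPartial n x = 0) :
    (x, x) ∈ region n ∧ IsCritPt n x x ∧
      ∀ k l : ℝ, (k, l) ∈ region n → IsCritPt n k l → k = x ∧ l = x := by
  have hx0 : 0 < x := by linarith
  refine ⟨⟨hx1, hx1, by linarith⟩, (isCritPt_iff hx0.ne' hx0.ne').2 ⟨hx, hx⟩, ?_⟩
  rintro k l ⟨hk, hl, hkl⟩ hcrit
  obtain ⟨rfl, hk0⟩ := eq_and_diagPartial_eq_zero_of_isCritPt (by linarith) (by linarith)
    (by linarith) hcrit
  have hkx : k = x := (diagPartial_strictAntiOn n).injOn ⟨by linarith, by linarith⟩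
    ⟨hx0, by linarith⟩ (hk0.trans hx.symm)
  exact ⟨hkx, hkx⟩

noncomputable def kApprox (n : ℕ) : ℝ := (log n - log (log n) + log (log 2)) / log 2

theorem exp_neg_kApprox_add_mul_log_two {n : ℕ} (hn : 1 < (n : ℝ)) (δ : ℝ) :
    exp (-(kApprox n + δ) * log 2) = log n / (n * log 2) * exp (-δ * log 2) := by
  have hexp : -(kApprox n + δ) * log 2 = -log n + log (log n) - log (log 2) + -δ * log 2 := by
    simp only [kApprox]; field_simp; ring
  rw [hexp, exp_add, exp_sub, exp_add, exp_neg, exp_log (by linarith), exp_log (log_pos hn),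
    exp_log (log_pos one_lt_two)]
  field_simp

theorem diagPartial_kApprox_add {n : ℕ} (hn : 1 < (n : ℝ)) (δ : ℝ) :
    diagPartial n (kApprox n + δ) = 2 * log (log n) - 2 * log (log 2) - log (kApprox n + δ)
      - 2 * δ * log 2 - log 2 / 2 + log n * (exp (-δ * log 2) - 1)
      + (2 - 2 * (kApprox n + δ) * log 2) * (log n / (n * log 2) * exp (-δ * log 2)) := by
  rw [diagPartial_eq, exp_neg_kApprox_add_mul_log_two hn]
  simp only [kApprox]
  field_simp
  ring

theorem log_log_two_mem : log (log 2) ∈ Ioo (-1 / 2) 0 := by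
  have hc := log_two_gt_d9
  have hc1 := log_two_lt_d9
  have hinv : (log 2)⁻¹ < 1.45 := by rw [inv_lt_comm₀ (by linarith) (by norm_num)]; linarith
  constructor
  · linarith [one_sub_inv_le_log_of_pos (by linarith : 0 < log 2)]
  · exact log_neg (by linarith) (by linarith)

theorem exp_one_le_log_of_one_le_log_log {n : ℕ} (h : 1 ≤ log (log n)) : exp 1 ≤ log n := by
  have hL : 0 < log n := by
    rcases (Real.log_natCast_nonneg n).lt_or_eq with hL | hL
    · exact hL
    · rw [← hL, log_zero] at h; linarith
  exact (le_log_iff_exp_le hL).1 h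

theorem one_lt_of_one_le_log_log {n : ℕ} (h : 1 ≤ log (log n)) : 1 < (n : ℝ) :=
  (log_pos_iff (Nat.cast_nonneg n)).1 <|
    lt_of_lt_of_le (exp_pos 1) (exp_one_le_log_of_one_le_log_log h)

theorem kApprox_mul_log_two (n : ℕ) :
    kApprox n * log 2 = log n - log (log n) + log (log 2) :=
  div_mul_cancel₀ _ (log_pos one_lt_two).ne'

theorem kApprox_pos {n : ℕ} (hLL : 1 ≤ log (log n)) : 0 < kApprox n := by
  have hL := exp_one_le_log_of_one_le_log_log hLL
  have hlog := log_le_sub_one_of_pos (lt_of_lt_of_le (exp_pos 1) hL)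
  have hd := log_log_two_mem.1
  have hc := log_two_gt_d9
  exact div_pos (by linarith) (by linarith)

theorem log_kApprox_le {n : ℕ} (hLL : 1 ≤ log (log n)) :
    log (kApprox n) ≤ log (log n) - log (log 2) := by
  have hL := exp_one_le_log_of_one_le_log_log hLL
  have hd := log_log_two_mem.2
  have hc := log_two_gt_d9
  rw [← log_div (by linarith [exp_pos 1]) (by linarith)]
  refine log_le_log (kApprox_pos hLL) (div_le_div_of_nonneg_right ?_ (by linarith))
  linarith

theorem half_le_kApprox {n : ℕ} (hLL : 1 ≤ log (log n)) (hLLL : 8 * log (log n) ≤ log n) :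
    log n / (2 * log 2) ≤ kApprox n := by
  have hL := exp_one_le_log_of_one_le_log_log hLL
  have hd := log_log_two_mem.1
  have hc := log_two_gt_d9
  rw [div_le_iff₀ (by linarith), ← mul_assoc, mul_comm _ 2, mul_assoc, kApprox_mul_log_two]
  linarith

theorem log_mul_log_div_le {n : ℕ} (hn1 : 1 < (n : ℝ)) (hn : 10 * log n ^ 2 ≤ n) :
    log n * (log n / (n * log 2)) ≤ 0.15 := by
  have hc := log_two_gt_d9
  rw [mul_div_assoc', div_le_iff₀ (by positivity)]
  nlinarith

theorem diagPartial_kApprox_pos {n : ℕ} (hLL : 1 ≤ log (log n)) (hn : 10 * log n ^ 2 ≤ n) :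
    0 < diagPartial n (kApprox n) := by
  have hn1 := one_lt_of_one_le_log_log hLL
  have hψ := diagPartial_kApprox_add hn1 0
  simp only [add_zero, zero_mul, neg_zero, exp_zero, mul_one, sub_self, mul_zero, sub_zero] at hψ
  have hE0 : 0 ≤ log n / (n * log 2) := by positivity
  have htcE : kApprox n * log 2 * (log n / (n * log 2)) ≤ log n * (log n / (n * log 2)) := by
    refine mul_le_mul_of_nonneg_right ?_ hE0
    linarith [kApprox_mul_log_two n, log_log_two_mem.2]
  rw [hψ]
  linarith [log_kApprox_le hLL, log_mul_log_div_le hn1 hn, log_two_lt_d9, log_log_two_mem.2]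

theorem diagPartial_kApprox_add_neg {n : ℕ} (hLL : 2 ≤ log (log n)) (hLLL : 8 * log (log n) ≤ log n)
    (hn : 10 * log n ^ 2 ≤ n) :
    diagPartial n (kApprox n + 5 * log (log n) / log n) < 0 := by
  have hLL1 : 1 ≤ log (log n) := by linarith
  have hn1 := one_lt_of_one_le_log_log hLL1
  have hLE := log_mul_log_div_le hn1 hn
  have hL := exp_one_le_log_of_one_le_log_log hLL1
  have ht := half_le_kApprox hLL1 hLLL
  have hc := log_two_gt_d9
  have hc' := log_two_lt_d9
  have hd := log_log_two_mem
  rw [diagPartial_kApprox_add hn1]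
  set c := log 2
  set L := log (n : ℝ)
  set LL := log L
  set t := kApprox n
  set ε := 5 * LL / L
  set E := L / (n * c)
  set y := ε * c with hy
  set F := exp (-ε * c)
  have hL0 : 0 < L := by linarith
  have hLy : L * y = 5 * c * LL := by simp only [hy, ε]; field_simp
  have hy0 : 0 ≤ y := by positivity
  have hy1 : y ≤ 0.44 := by nlinarith
  have hF : F = exp (-y) := by simp only [F, y, neg_mul]
  have hlogt : LL - c - log c ≤ log (t + ε) := by
    have hpos : 0 < L / (2 * c) := by positivity
    calc LL - c - log c = log (L / (2 * c)) := by
          rw [log_div hL0.ne' (by positivity), log_mul two_ne_zero (by positivity)]; ring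
      _ ≤ log (t + ε) := log_le_log hpos (by linarith [show 0 ≤ ε by positivity])
  have hdecay : L * (F - 1) ≤ -1.9 * LL := by
    have h1 : L * (F - 1) ≤ L * -(y * (1 - y)) :=
      mul_le_mul_of_nonneg_left (hF ▸ exp_neg_sub_one_le hy0) hL0.le
    have h2 : 0.56 * LL ≤ LL * (1 - y) := by nlinarith
    have h3 : 0.6931471803 * (LL * (1 - y)) ≤ c * (LL * (1 - y)) :=
      mul_le_mul_of_nonneg_right hc.le (by nlinarith)
    nlinarith
  have htail : (2 - 2 * (t + ε) * c) * (E * F) ≤ 0.12 := by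
    have hE0 : 0 ≤ E := div_nonneg hL0.le (by positivity)
    have hEF : E * F ≤ E := mul_le_of_le_one_right hE0 (hF ▸ exp_le_one_iff.2 (by linarith))
    have hs : 0 ≤ (t + ε) * c * (E * F) := by
      have : 0 ≤ t + ε := by linarith [show 0 ≤ ε by positivity, show 0 < L / (2 * c) by positivity]
      positivity
    nlinarith
  linarith [hd.1]

theorem one_le_kApprox {n : ℕ} (hLL : 1 ≤ log (log n)) (hLLL : 8 * log (log n) ≤ log n) :
    1 ≤ kApprox n := by
  have hL := exp_one_le_log_of_one_le_log_log hLL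
  have hc := log_two_lt_d9
  refine le_trans ?_ (half_le_kApprox hLL hLLL)
  rw [le_div_iff₀ (by positivity)]
  linarith [exp_one_gt_d9]

theorem two_mul_kApprox_add_le {n : ℕ} (hLL : 1 ≤ log (log n)) (hLLL : 8 * log (log n) ≤ log n)
    (hn : 10 * log n ^ 2 ≤ n) : 2 * (kApprox n + 5 * log (log n) / log n) ≤ n - 1 := by
  have hL := exp_one_le_log_of_one_le_log_log hLL
  have hc := log_two_gt_d9
  have ht0 := (one_le_kApprox hLL hLLL)
  have htc := kApprox_mul_log_two n
  have hε : 5 * log (log n) / log n ≤ 1 := by rw [div_le_one (by linarith)]; linarith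
  nlinarith [log_log_two_mem.2]

theorem exists_diagPartial_eq_zero {n : ℕ} (hLL : 2 ≤ log (log n))
    (hLLL : 8 * log (log n) ≤ log n) (hn : 10 * log n ^ 2 ≤ n) :
    ∃ k ∈ Icc (kApprox n) (kApprox n + 5 * log (log n) / log n), diagPartial n k = 0 := by
  have hLL1 : 1 ≤ log (log n) := by linarith
  have ht := one_le_kApprox hLL1 hLLL
  have hε : 0 ≤ 5 * log (log n) / log n := div_nonneg (by linarith) (by linarith)
  refine intermediate_value_Icc' (by linarith) ((continuousOn_diagPartial n).mono ?_)
    ⟨(diagPartial_kApprox_add_neg hLL hLLL hn).le, (diagPartial_kApprox_pos hLL1 hn).le⟩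
  exact fun x hx => lt_of_lt_of_le (by linarith) hx.1

theorem eventually_log_log_bounds :
    ∀ᶠ n : ℕ in atTop, 2 ≤ log (log n) ∧ 8 * log (log n) ≤ log n ∧ 10 * log n ^ 2 ≤ n := by
  have hn : Tendsto (fun n : ℕ => (n : ℝ)) atTop atTop := tendsto_natCast_atTop_atTop
  have hL := tendsto_log_atTop.comp hn
  have h8 : ∀ᶠ x : ℝ in atTop, 8 * log x ≤ x := by
    filter_upwards [isLittleO_log_id_atTop.bound (by norm_num : (0 : ℝ) < 1 / 8),
      eventually_ge_atTop 0] with x hx hx0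
    rw [Real.norm_eq_abs, Real.norm_eq_abs, id, abs_of_nonneg hx0] at hx
    linarith [le_abs_self (log x)]
  have h10 : ∀ᶠ x : ℝ in atTop, 10 * log x ^ 2 ≤ x := by
    filter_upwards [(isLittleO_pow_log_id_atTop (n := 2)).bound (by norm_num : (0 : ℝ) < 1 / 10),
      eventually_ge_atTop 0] with x hx hx0
    rw [Real.norm_eq_abs, Real.norm_eq_abs, id, abs_of_nonneg hx0, abs_of_nonneg (sq_nonneg _)] at hx
    linarith
  exact ((tendsto_log_atTop.comp hL).eventually_ge_atTop 2).and
    ((hL.eventually h8).and (hn.eventually h10))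

/-- For all sufficiently large `n`, the gradient of `f` has a unique
zero in the region `R`; it has the symmetric form `(k*(n), k*(n))`, and
`k*(n) = (ln n − ln ln n + ln ln 2)/ln 2 + O(ln ln n / ln n)`. -/
theorem unique_critical_point :
    ∃ (kstar : ℕ → ℝ) (C : ℝ) (N : ℕ), ∀ n : ℕ, N ≤ n →
      ((kstar n, kstar n) ∈ region n ∧ IsCritPt n (kstar n) (kstar n) ∧
        ∀ k l : ℝ, (k, l) ∈ region n → IsCritPt n k l → k = kstar n ∧ l = kstar n) ∧
      |kstar n - (Real.log n - Real.log (Real.log n) + Real.log (Real.log 2)) / Real.log 2|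
        ≤ C * Real.log (Real.log n) / Real.log n := by
  obtain ⟨N, hN⟩ := eventually_atTop.1 eventually_log_log_bounds
  have hzero : ∀ n, ∃ k, N ≤ n →
      k ∈ Icc (kApprox n) (kApprox n + 5 * log (log n) / log n) ∧ diagPartial n k = 0 := by
    intro n
    by_cases hn : N ≤ n
    · obtain ⟨k, hk, hk0⟩ := exists_diagPartial_eq_zero (hN n hn).1 (hN n hn).2.1 (hN n hn).2.2
      exact ⟨k, fun _ => ⟨hk, hk0⟩⟩
    · exact ⟨0, fun h => absurd h hn⟩
  choose kstar hkstar using hzero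
  refine ⟨kstar, 5, N, fun n hn => ?_⟩
  obtain ⟨hLL, hLLL, hnL⟩ := hN n hn
  obtain ⟨⟨hlo, hhi⟩, h0⟩ := hkstar n hn
  have hLL1 : 1 ≤ log (log n) := by linarith
  refine ⟨isCritPt_unique_of_diagPartial_eq_zero (by linarith [one_le_kApprox hLL1 hLLL])
    (by linarith [two_mul_kApprox_add_le hLL1 hLLL hnL]) h0, ?_⟩
  change |kstar n - kApprox n| ≤ _
  rw [abs_of_nonneg (sub_nonneg.2 hlo)]
  linarith
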